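/- With A_i = σ_n(a_i) and T = σ_n(t) as above, the operators satisfy the modulus relation q² Σ_{i=1}^n A_i* A_i = T - T², and for each i the exchange relation A_i A_i* = q² A_i* A_i + q²(1-q²) Σ_{ℓ<i} A_ℓ* A_ℓ + (1-q²) T². -/
import Mathlib


open Finset

/-- The prefactor `∏_{k<i} q^{m_k} ∏_{k>i} q^{2 m_k}` coming from
`Π_{k<i} σ(τ)_k^{1/2} Π_{k>i} σ(τ)_k` acting on the basis vector `|m⟩`. -/
noncomputable def tauPrefactor (q : ℝ) {n : ℕ} (i : Fin n) (m : Fin n → ℕ) : ℂ :=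
  ∏ k : Fin n,
    (if k < i then (q : ℂ) ^ (m k) else if i < k then (q : ℂ) ^ (2 * m k) else 1)

/-- `A_i = σ_n(a_i) = σ(α)_i · Π_{k<i} σ(τ)_k^{1/2} · Π_{k>i} σ(τ)_k` on the span of
the orthonormal basis `{|m⟩ : m ∈ ℕⁿ}` of `ℓ²(ℕ)^{⊗n}`:
`A_i |m⟩ = q^{m_i-1}(1-q^{2m_i})^{1/2} ∏_{k<i} q^{m_k} ∏_{k>i} q^{2m_k} |m - δ_i⟩`. -/
noncomputable def aOp (q : ℝ) {n : ℕ} (i : Fin n) :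
    ((Fin n → ℕ) →₀ ℂ) →ₗ[ℂ] ((Fin n → ℕ) →₀ ℂ) :=
  Finsupp.lsum ℂ fun m =>
    (((q : ℂ) ^ (m i - 1) * (Real.sqrt (1 - q ^ (2 * m i)) : ℂ) * tauPrefactor q i m) •
      Finsupp.lsingle (Function.update m i (m i - 1)))

/-- The adjoint `A_i*`:
`A_i* |m⟩ = q^{m_i}(1-q^{2(m_i+1)})^{1/2} ∏_{k<i} q^{m_k} ∏_{k>i} q^{2m_k} |m + δ_i⟩`. -/
noncomputable def aStarOp (q : ℝ) {n : ℕ} (i : Fin n) :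
    ((Fin n → ℕ) →₀ ℂ) →ₗ[ℂ] ((Fin n → ℕ) →₀ ℂ) :=
  Finsupp.lsum ℂ fun m =>
    (((q : ℂ) ^ (m i) * (Real.sqrt (1 - q ^ (2 * (m i + 1))) : ℂ) * tauPrefactor q i m) •
      Finsupp.lsingle (Function.update m i (m i + 1)))

/-- `T = σ_n(t) = σ(τ)^{⊗n}`: `T|m⟩ = q^{2(m_1+⋯+m_n)}|m⟩`. -/
noncomputable def tOp (q : ℝ) {n : ℕ} :
    ((Fin n → ℕ) →₀ ℂ) →ₗ[ℂ] ((Fin n → ℕ) →₀ ℂ) :=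
  Finsupp.lsum ℂ fun m => (((q : ℂ) ^ (2 * ∑ k, m k)) • Finsupp.lsingle m)

lemma tauPrefactor_update (q : ℝ) {n : ℕ} (i : Fin n) (m : Fin n → ℕ) (v : ℕ) :
    tauPrefactor q i (Function.update m i v) = tauPrefactor q i m := by
  unfold tauPrefactor
  refine Finset.prod_congr rfl fun k _ => ?_
  rcases lt_trichotomy k i with h | h | h
  · simp [Function.update_of_ne h.ne, h]
  · simp [h]
  · simp [Function.update_of_ne h.ne', h, h.asymm]

noncomputable def gFun (q : ℝ) {n : ℕ} (m : Fin n → ℕ) (j : ℕ) : ℂ :=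
  ∏ k : Fin n, (if (k : ℕ) < j then (q : ℂ) ^ (2 * m k) else (q : ℂ) ^ (4 * m k))

lemma tauPrefactor_sq (q : ℝ) {n : ℕ} (i : Fin n) (m : Fin n → ℕ) :
    (tauPrefactor q i m) ^ 2
      = ∏ k ∈ ({i}ᶜ : Finset (Fin n)),
          (if (k : ℕ) < (i : ℕ) then (q : ℂ) ^ (2 * m k) else (q : ℂ) ^ (4 * m k)) := by
  unfold tauPrefactor
  rw [← Finset.prod_pow]
  rw [Fintype.prod_eq_mul_prod_compl i]
  rw [if_neg (lt_irrefl i), if_neg (lt_irrefl i), one_pow, one_mul]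
  refine Finset.prod_congr rfl fun k hk => ?_
  rcases lt_trichotomy k i with h | h | h
  · rw [if_pos h, if_pos (show ((k:ℕ) < (i:ℕ)) from h), ← pow_mul, mul_comm]
  · simp at hk; exact absurd h hk
  · rw [if_neg h.asymm, if_pos h, if_neg (by exact_mod_cast not_lt.mpr h.le), ← pow_mul]
    congr 1; ring

lemma gFun_succ (q : ℝ) {n : ℕ} (i : Fin n) (m : Fin n → ℕ) :
    gFun q m ((i : ℕ) + 1) = (q : ℂ) ^ (2 * m i) * (tauPrefactor q i m) ^ 2 := by
  rw [tauPrefactor_sq, gFun, Fintype.prod_eq_mul_prod_compl i]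
  rw [if_pos (Nat.lt_succ_self _)]
  congr 1
  refine Finset.prod_congr rfl fun k hk => ?_
  simp only [Finset.mem_compl, Finset.mem_singleton] at hk
  have : (k : ℕ) < (i : ℕ) + 1 ↔ (k : ℕ) < (i : ℕ) := by
    constructor
    · intro h; rcases Nat.lt_succ_iff_lt_or_eq.mp h with h | h
      · exact h
      · exact absurd (Fin.val_injective h) hk
    · exact fun h => h.trans (Nat.lt_succ_self _)
  by_cases h : (k : ℕ) < (i : ℕ) <;> simp [h, this]

lemma gFun_self (q : ℝ) {n : ℕ} (i : Fin n) (m : Fin n → ℕ) :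
    gFun q m (i : ℕ) = (q : ℂ) ^ (4 * m i) * (tauPrefactor q i m) ^ 2 := by
  rw [tauPrefactor_sq, gFun, Fintype.prod_eq_mul_prod_compl i, if_neg (lt_irrefl _)]

lemma gFun_zero (q : ℝ) {n : ℕ} (m : Fin n → ℕ) :
    gFun q m 0 = (q : ℂ) ^ (2 * ∑ k, m k) * (q : ℂ) ^ (2 * ∑ k, m k) := by
  rw [gFun, ← pow_add]
  simp only [Nat.not_lt_zero, if_neg, if_false]
  rw [Finset.prod_pow_eq_pow_sum]
  congr 1
  rw [Finset.mul_sum, ← Finset.sum_add_distrib]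
  exact Finset.sum_congr rfl fun k _ => by ring

lemma gFun_top (q : ℝ) {n : ℕ} (m : Fin n → ℕ) :
    gFun q m n = (q : ℂ) ^ (2 * ∑ k, m k) := by
  rw [gFun]
  simp only [Fin.is_lt, if_true]
  rw [Finset.prod_pow_eq_pow_sum, Finset.mul_sum]

noncomputable def cCoef (q : ℝ) {n : ℕ} (i : Fin n) (m : Fin n → ℕ) : ℂ :=
  (q:ℂ)^(m i - 1) * (q:ℂ)^(m i - 1) * (1 - (q:ℂ)^(2 * m i)) * (tauPrefactor q i m)^2

noncomputable def dCoef (q : ℝ) {n : ℕ} (i : Fin n) (m : Fin n → ℕ) : ℂ :=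
  (q:ℂ)^(m i) * (q:ℂ)^(m i) * (1 - (q:ℂ)^(2 * (m i + 1))) * (tauPrefactor q i m)^2

lemma sqrt_mul_self_c (q : ℝ) (hq0 : 0 < q) (hq1 : q < 1) (N : ℕ) :
    ((Real.sqrt (1 - q ^ N) : ℝ) : ℂ) * ((Real.sqrt (1 - q ^ N) : ℝ) : ℂ)
      = 1 - (q : ℂ) ^ N := by
  rw [← Complex.ofReal_mul, Real.mul_self_sqrt (by
    have := pow_le_one₀ hq0.le hq1.le (n := N); linarith)]
  push_cast; ring

lemma aStarOp_aOp_single (q : ℝ) (hq0 : 0 < q) (hq1 : q < 1) {n : ℕ} (i : Fin n)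
    (m : Fin n → ℕ) :
    (aStarOp q i ∘ₗ aOp q i) (Finsupp.single m 1) = cCoef q i m • Finsupp.single m 1 := by
  cases h : m i with
  | zero =>
    simp [aOp, aStarOp, cCoef, Finsupp.lsum_single, h]
  | succ s =>
    have hup : Function.update (Function.update m i s) i (s + 1) = m := by
      rw [Function.update_idem, ← h, Function.update_eq_self]
    simp only [LinearMap.comp_apply, aOp, aStarOp, Finsupp.lsum_single,
      LinearMap.smul_apply, Finsupp.lsingle_apply, map_smul, h,
      Nat.add_sub_cancel, Function.update_self, tauPrefactor_update, hup, smul_smul]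
    congr 1
    rw [cCoef, h, Nat.add_sub_cancel]
    have hs := sqrt_mul_self_c q hq0 hq1 (2 * (s + 1))
    linear_combination ((q:ℂ)^s * (q:ℂ)^s * tauPrefactor q i m * tauPrefactor q i m) * hs

lemma aOp_aStarOp_single (q : ℝ) (hq0 : 0 < q) (hq1 : q < 1) {n : ℕ} (i : Fin n)
    (m : Fin n → ℕ) :
    (aOp q i ∘ₗ aStarOp q i) (Finsupp.single m 1) = dCoef q i m • Finsupp.single m 1 := by
  have hup : Function.update (Function.update m i (m i + 1)) i (m i) = m := by
    rw [Function.update_idem, Function.update_eq_self]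
  simp only [LinearMap.comp_apply, aOp, aStarOp, Finsupp.lsum_single,
    LinearMap.smul_apply, Finsupp.lsingle_apply, map_smul,
    Nat.add_sub_cancel, Function.update_self, tauPrefactor_update, hup, smul_smul]
  congr 1
  rw [dCoef]
  have hs := sqrt_mul_self_c q hq0 hq1 (2 * (m i + 1))
  linear_combination ((q:ℂ)^(m i) * (q:ℂ)^(m i) * tauPrefactor q i m * tauPrefactor q i m) * hs

lemma tOp_single (q : ℝ) {n : ℕ} (m : Fin n → ℕ) :
    tOp q (Finsupp.single m 1) = ((q : ℂ) ^ (2 * ∑ k, m k)) • Finsupp.single m 1 := by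
  simp [tOp, Finsupp.lsum_single]

lemma tOp_tOp_single (q : ℝ) {n : ℕ} (m : Fin n → ℕ) :
    (tOp q ∘ₗ tOp q) (Finsupp.single m 1) = gFun q m 0 • Finsupp.single m 1 := by
  rw [LinearMap.comp_apply, tOp_single, map_smul, tOp_single, smul_smul, gFun_zero]

lemma lemA (q : ℝ) {n : ℕ} (i : Fin n) (m : Fin n → ℕ) :
    (q : ℂ) ^ 2 * cCoef q i m = gFun q m ((i : ℕ) + 1) - gFun q m (i : ℕ) := by
  rw [gFun_succ, gFun_self, cCoef]
  cases h : m i with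
  | zero => simp
  | succ s =>
    rw [Nat.add_sub_cancel]
    have e1 : (q : ℂ) ^ (2 * (s + 1)) = (q : ℂ) ^ 2 * (q : ℂ) ^ s * (q : ℂ) ^ s := by
      rw [show 2 * (s + 1) = 2 + (s + s) by ring, pow_add, pow_add]; ring
    have e2 : (q : ℂ) ^ (4 * (s + 1)) = (q : ℂ) ^ (2 * (s + 1)) * (q : ℂ) ^ (2 * (s + 1)) := by
      rw [← pow_add]; congr 1; ring
    rw [e2, e1]; ring

lemma lemB (q : ℝ) {n : ℕ} (i : Fin n) (m : Fin n → ℕ) :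
    dCoef q i m = (q : ℂ) ^ 2 * cCoef q i m + (1 - (q : ℂ) ^ 2) * gFun q m (i : ℕ) := by
  rw [gFun_self, cCoef, dCoef]
  cases h : m i with
  | zero => simp
  | succ s =>
    rw [Nat.add_sub_cancel]
    have e1 : (q : ℂ) ^ (2 * (s + 1)) = (q : ℂ) ^ 2 * (q : ℂ) ^ s * (q : ℂ) ^ s := by
      rw [show 2 * (s + 1) = 2 + (s + s) by ring, pow_add, pow_add]; ring
    have e2 : (q : ℂ) ^ (4 * (s + 1)) = (q : ℂ) ^ (2 * (s + 1)) * (q : ℂ) ^ (2 * (s + 1)) := by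
      rw [← pow_add]; congr 1; ring
    have e3 : (q : ℂ) ^ (2 * (s + 1 + 1)) = (q : ℂ) ^ 2 * (q : ℂ) ^ (2 * (s + 1)) := by
      rw [← pow_add]; congr 1; ring
    rw [e3, e2, e1]; ring

lemma sum_telescope_all (q : ℝ) {n : ℕ} (m : Fin n → ℕ) :
    ∑ i : Fin n, (q : ℂ) ^ 2 * cCoef q i m = gFun q m n - gFun q m 0 := by
  rw [Finset.sum_congr rfl fun i _ => lemA q i m,
    Fin.sum_univ_eq_sum_range (fun j => gFun q m (j + 1) - gFun q m j) n,
    Finset.sum_range_sub (gFun q m)]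

lemma sum_telescope_lt (q : ℝ) {n : ℕ} (i : Fin n) (m : Fin n → ℕ) :
    ∑ ℓ ∈ univ.filter (· < i), (q : ℂ) ^ 2 * cCoef q ℓ m
      = gFun q m (i : ℕ) - gFun q m 0 := by
  rw [Finset.sum_congr rfl fun ℓ _ => lemA q ℓ m, Finset.sum_filter]
  have : ∀ ℓ : Fin n,
      (if ℓ < i then gFun q m ((ℓ : ℕ) + 1) - gFun q m (ℓ : ℕ) else 0)
        = (fun j => if j < (i : ℕ) then gFun q m (j + 1) - gFun q m j else 0) (ℓ : ℕ) := by
    intro ℓ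
    simp only [Fin.lt_def]
  rw [Finset.sum_congr rfl fun ℓ _ => this ℓ,
    Fin.sum_univ_eq_sum_range (fun j => if j < (i : ℕ) then gFun q m (j + 1) - gFun q m j else 0) n,
    ← Finset.sum_filter]
  have hset : (Finset.range n).filter (· < (i : ℕ)) = Finset.range (i : ℕ) := by
    ext j; simp only [Finset.mem_filter, Finset.mem_range]
    exact ⟨fun h => h.2, fun h => ⟨h.trans i.isLt, h⟩⟩
  rw [hset, Finset.sum_range_sub (gFun q m)]

/-- the modulus relation `q² ∑_i A_i* A_i = T - T²` and the exchange
relation `A_i A_i* = q² A_i* A_i + q²(1-q²) ∑_{ℓ<i} A_ℓ* A_ℓ + (1-q²) T²`. -/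
theorem quantum_even_sphere_remaining_relations (q : ℝ) (hq0 : 0 < q) (hq1 : q < 1)
    (n : ℕ) :
    ((q : ℂ) ^ 2) • (∑ i : Fin n, aStarOp q i ∘ₗ aOp q i)
        = tOp q - tOp q ∘ₗ tOp q ∧
    ∀ i : Fin n,
      aOp q i ∘ₗ aStarOp q i
        = ((q : ℂ) ^ 2) • (aStarOp q i ∘ₗ aOp q i)
          + ((q : ℂ) ^ 2 * (1 - (q : ℂ) ^ 2)) •
              (∑ ℓ ∈ univ.filter (· < i), aStarOp q ℓ ∘ₗ aOp q ℓ)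
          + (1 - (q : ℂ) ^ 2) • (tOp q ∘ₗ tOp q) := by
  constructor
  · refine Finsupp.lhom_ext fun m b => ?_
    have hb : (Finsupp.single m b : (Fin n → ℕ) →₀ ℂ) = b • Finsupp.single m 1 := by
      rw [Finsupp.smul_single', mul_one]
    rw [hb, map_smul, map_smul]
    congr 1
    rw [LinearMap.smul_apply, LinearMap.sum_apply, LinearMap.sub_apply, tOp_single,
      tOp_tOp_single,
      Finset.sum_congr rfl fun i _ => aStarOp_aOp_single q hq0 hq1 i m,
      ← Finset.sum_smul, smul_smul, ← sub_smul]
    congr 1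
    rw [Finset.mul_sum]
    rw [show ∑ i : Fin n, (q : ℂ) ^ 2 * cCoef q i m = gFun q m n - gFun q m 0 from
      sum_telescope_all q m, gFun_top]
  · intro i
    refine Finsupp.lhom_ext fun m b => ?_
    have hb : (Finsupp.single m b : (Fin n → ℕ) →₀ ℂ) = b • Finsupp.single m 1 := by
      rw [Finsupp.smul_single', mul_one]
    rw [hb, map_smul, map_smul]
    congr 1
    rw [LinearMap.add_apply, LinearMap.add_apply, LinearMap.smul_apply, LinearMap.smul_apply,
      LinearMap.smul_apply, LinearMap.sum_apply, tOp_tOp_single,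
      aOp_aStarOp_single q hq0 hq1 i m, aStarOp_aOp_single q hq0 hq1 i m,
      Finset.sum_congr rfl fun ℓ _ => aStarOp_aOp_single q hq0 hq1 ℓ m,
      ← Finset.sum_smul, smul_smul, smul_smul, smul_smul, ← add_smul, ← add_smul]
    congr 1
    have hs : (q : ℂ) ^ 2 * ∑ ℓ ∈ univ.filter (· < i), cCoef q ℓ m
        = gFun q m (i : ℕ) - gFun q m 0 := by
      rw [Finset.mul_sum]; exact sum_telescope_lt q i m
    linear_combination (lemB q i m) - (1 - (q : ℂ) ^ 2) * hs
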